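/- If (X^i_{jkl}) (indices i, j, k, l ∈ {1,2}) is a real array totally symmetric in the three lower indices j, k, l such that for every fixed l ∈ {1,2} the array (X^i_{jkl})_{i,j,k} belongs to g², then X^i_{jkl} = 0 for all indices. In other words, the first prolongation of g² is the zero space. -/

import Mathlib

/-!
Total symmetry makes each `X^i_{jkl}` a function of the number of lower indices equal to `2`,
so `X` has only eight independent entries `X^i_{111}, X^i_{112}, X^i_{122}, X^i_{222}`.
The two copies (`l = 1, 2`) of the four defining equations of g² are eight linear equations
in these entries, and the system is nonsingular: six of them kill an entry each, and the
remaining pair `2X¹₁₁₂ = X²₁₂₂`, `X¹₁₁₂ = 2X²₁₂₂` forces the last two to vanish.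
-/

/-- The space g² of arrays (X^i_{jk}), symmetric in the lower indices, satisfying
X²₁₁ = 0, X¹₁₁ − 2X²₁₂ = 0, 2X¹₁₂ − X²₂₂ = 0, X¹₂₂ = 0.
(Index value `0` stands for `1`, index value `1` stands for `2`.) -/
def g2 : Submodule ℝ (Fin 2 → Fin 2 → Fin 2 → ℝ) where
  carrier := {X | (∀ i j k, X i j k = X i k j) ∧
    X 1 0 0 = 0 ∧ X 0 0 0 - 2 * X 1 0 1 = 0 ∧ 2 * X 0 0 1 - X 1 1 1 = 0 ∧ X 0 1 1 = 0}
  add_mem' := by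
    rintro X Y ⟨hs, h1, h2, h3, h4⟩ ⟨hs', h1', h2', h3', h4'⟩
    refine ⟨fun i j k => ?_, ?_, ?_, ?_, ?_⟩ <;>
      simp only [Pi.add_apply] <;>
      first
        | rw [hs i j k, hs' i j k]
        | linarith
  zero_mem' := ⟨fun i j k => rfl, by norm_num, by norm_num, by norm_num, by norm_num⟩
  smul_mem' := by
    rintro c X ⟨hs, h1, h2, h3, h4⟩
    refine ⟨fun i j k => ?_, ?_, ?_, ?_, ?_⟩ <;>
      simp only [Pi.smul_apply, smul_eq_mul] <;>
      first
        | rw [hs i j k]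
        | linear_combination c * h1
        | linear_combination c * h2
        | linear_combination c * h3
        | linear_combination c * h4

lemma eq_zero_of_symm_of_sorted_eq_zero {M : Type*} [Zero M] (Y : Fin 2 → Fin 2 → Fin 2 → M)
    (h12 : ∀ j k l, Y j k l = Y k j l) (h23 : ∀ j k l, Y j k l = Y j l k)
    (h000 : Y 0 0 0 = 0) (h001 : Y 0 0 1 = 0) (h011 : Y 0 1 1 = 0) (h111 : Y 1 1 1 = 0) :
    Y = 0 := by
  have h010 : Y 0 1 0 = 0 := by rw [h23, h001]
  have h101 : Y 1 0 1 = 0 := by rw [h12, h011]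
  funext j k l
  revert j k l
  simp only [Fin.forall_fin_two, Pi.zero_apply]
  exact ⟨⟨⟨h000, h001⟩, h010, h011⟩, ⟨by rw [h12, h010], h101⟩, by rw [h23, h101], h111⟩

theorem stmt4 (X : Fin 2 → Fin 2 → Fin 2 → Fin 2 → ℝ)
    (hsym1 : ∀ i j k l, X i j k l = X i k j l)
    (hsym2 : ∀ i j k l, X i j k l = X i j l k)
    (hg : ∀ l, (fun i j k => X i j k l) ∈ g2) :
    X = 0 := by
  obtain ⟨-, a1, a2, a3, a4⟩ := hg 0
  obtain ⟨-, b1, b2, b3, b4⟩ := hg 1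
  have h1010 : X 1 0 1 0 = X 1 0 0 1 := hsym2 1 0 1 0
  have h0010 : X 0 0 1 0 = X 0 0 0 1 := hsym2 0 0 1 0
  have h1110 : X 1 1 1 0 = X 1 0 1 1 := by rw [hsym2, hsym1]
  have h0110 : X 0 1 1 0 = X 0 0 1 1 := by rw [hsym2, hsym1]
  have h1011 : X 1 0 1 1 = 0 := by linarith
  have h0001 : X 0 0 0 1 = 0 := by linarith
  refine funext (Fin.forall_fin_two.2 ⟨?_, ?_⟩) <;>
    apply eq_zero_of_symm_of_sorted_eq_zero _ (hsym1 _) (hsym2 _) <;> linarith
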